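/- arXiv:1801.00517 — 2 statements merged into one kernel-verified Lean document; each statement's English description precedes it below -/
import Mathlib

section
/- Let q ≥ 2 and t be positive integers with gcd(t,q) = 1, let a be an integer with gcd(a,q) = 1 and t | a²+1, and let b = q(a²+1)/t. Then S(a,b) = (q²−1)a/(tq) − S(aq, t) + S(a t*, q), where t* is any integer with t·t* ≡ 1 (mod q). -/
/-- The sawtooth function on rationals. -/
def saw (x : ℚ) : ℚ := if x.den = 1 then 0 else Int.fract x - 1/2

/-- The normalized Dedekind sum `S(a,b) = 12 s(a,b)`. -/
def S (a b : ℤ) : ℚ :=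
  12 * ∑ k ∈ Finset.Icc 1 b.toNat, saw ((k : ℚ) / (b : ℚ)) * saw (((a : ℚ) * k) / (b : ℚ))

/-!
Everything comes from Rademacher's three-term reciprocity law for
`s(u, v; n) = ∑_{k mod n} ((u k / n)) ((v k / n))`: for pairwise coprime positive `a, b, c`,
`s(b, c; a) + s(c, a; b) + s(a, b; c) = -1/4 + (a² + b² + c²) / (12 a b c)`.
The distribution relation `∑_{i < n} ((x + i / n)) = ((n x))` turns the left side into a sum over
`[0, a) × [0, b) × [0, c)` of `-(P Q + Q R + R P)`, where `P, Q, R` are sawtooth values at three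
rationals summing to zero, so `P + Q + R` is `0` when one of them is an integer and `±1/2`
otherwise. The sums of `P²` reduce to `∑_{l < a b} ((l / a b))²`, because `k b - i a` runs over all
residues modulo `a b`.

With `(a, b, 1)` the law expresses `S(a, b)` through `s(b, 1; a)`. With `(a, t, q)`, the
congruences `t b ≡ q (mod a)`, `a² ≡ -1 (mod t)` and `t t* ≡ 1 (mod q)` identify its terms with
`s(b, 1; a)`, `-S(a q, t) / 12` and `S(a t*, q) / 12`. Subtracting the two laws gives the formula
for `a > 0`, and both sides are odd in `a`.
-/

open Finset

lemma saw_eq_ite (x : ℚ) : saw x = if Int.fract x = 0 then 0 else Int.fract x - 1 / 2 := by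
  have : x.den = 1 ↔ Int.fract x = 0 := by
    rw [Rat.den_eq_one_iff, Int.fract_eq_zero_iff]
    exact ⟨fun h => ⟨_, h⟩, fun ⟨m, hm⟩ => by rw [← hm, Rat.num_intCast]⟩
  simp only [saw, this]

lemma saw_intCast (m : ℤ) : saw m = 0 := by simp [saw_eq_ite]

@[simp] lemma saw_zero : saw 0 = 0 := by simpa using saw_intCast 0

lemma saw_add_intCast (x : ℚ) (m : ℤ) : saw (x + m) = saw x := by
  simp only [saw_eq_ite, Int.fract_add_intCast]

lemma saw_periodic : Function.Periodic saw 1 := by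
  intro x; simpa using saw_add_intCast x 1

lemma saw_neg (x : ℚ) : saw (-x) = -saw x := by
  by_cases hx : Int.fract x = 0
  · obtain ⟨m, rfl⟩ := Int.fract_eq_zero_iff.mp hx
    rw [← Int.cast_neg, saw_intCast, saw_intCast, neg_zero]
  · have hx' : Int.fract (-x) ≠ 0 := by
      rw [Int.fract_neg hx]; linarith [Int.fract_lt_one x]
    rw [saw_eq_ite, saw_eq_ite, if_neg hx, if_neg hx', Int.fract_neg hx]
    ring

lemma saw_of_pos_of_lt_one {x : ℚ} (h0 : 0 < x) (h1 : x < 1) : saw x = x - 1 / 2 := by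
  have hx : Int.fract x = x := Int.fract_eq_self.mpr ⟨h0.le, h1⟩
  rw [saw_eq_ite, hx, if_neg h0.ne']

lemma sum_range_natCast (n : ℕ) : ∑ i ∈ range n, (i : ℚ) = n * (n - 1) / 2 := by
  induction n with
  | zero => simp
  | succ n ih => rw [sum_range_succ, ih]; push_cast; ring

lemma sum_range_succ_eq_of_eq {M : Type*} [AddCommMonoid M] [IsRightCancelAdd M] (f : ℕ → M)
    {n : ℕ} (h : f n = f 0) : ∑ i ∈ range n, f (i + 1) = ∑ i ∈ range n, f i :=
  add_right_cancel ((sum_range_succ' f n).symm.trans (h ▸ sum_range_succ f n))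

lemma sum_saw_add_div_of_nonneg_of_mul_lt_one {y : ℚ} {n : ℕ} (hn : 0 < n) (hy0 : 0 ≤ y)
    (hy1 : n * y < 1) : ∑ i ∈ range n, saw (y + i / n) = saw (n * y) := by
  obtain ⟨m, rfl⟩ : ∃ m, n = m + 1 := ⟨n - 1, by omega⟩
  push_cast at hy1 ⊢
  have hterm : ∀ i ∈ range m, saw (y + ((i : ℚ) + 1) / (m + 1))
      = y + ((i : ℚ) + 1) / (m + 1) - 1 / 2 := by
    intro i hi
    have hi : (i : ℚ) + 1 ≤ m := by exact_mod_cast mem_range.mp hi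
    refine saw_of_pos_of_lt_one (by positivity) ?_
    rw [← lt_sub_iff_add_lt', div_lt_iff₀ (by positivity)]
    nlinarith
  have hsaw : saw ((m + 1) * y) = saw y + m * y := by
    rcases hy0.eq_or_lt with rfl | hy
    · simp
    · rw [saw_of_pos_of_lt_one (by positivity) hy1, saw_of_pos_of_lt_one hy (by nlinarith)]
      ring
  rw [sum_range_succ']
  push_cast
  rw [sum_congr rfl hterm]
  simp only [sum_sub_distrib, sum_add_distrib, ← sum_div, sum_range_natCast, sum_const, card_range,
    nsmul_eq_mul, zero_div, add_zero, hsaw]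
  field_simp
  ring

theorem sum_saw_add_div (x : ℚ) {n : ℕ} (hn : 0 < n) :
    ∑ i ∈ range n, saw (x + i / n) = saw (n * x) := by
  have hnQ : (n : ℚ) ≠ 0 := by positivity
  set F : ℚ → ℚ := fun x => ∑ i ∈ range n, saw (x + i / n) - saw (n * x) with hF
  have hper : Function.Periodic F (1 / n) := by
    intro x
    have hshift := sum_range_succ_eq_of_eq (fun i : ℕ => saw (x + i / n)) (n := n) (by
      simp only [div_self hnQ, Nat.cast_zero, zero_div, add_zero, saw_periodic x])
    simp only [hF, mul_add, mul_one_div_cancel hnQ, saw_periodic (n * x), ← hshift]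
    push_cast
    ring_nf
  set y := x - ⌊n * x⌋ / n
  have hny : n * y = Int.fract (n * x) := by rw [Int.fract]; simp only [y]; field_simp
  have hFy : F y = 0 := sub_eq_zero.mpr <| sum_saw_add_div_of_nonneg_of_mul_lt_one hn
    (nonneg_of_mul_nonneg_right (hny ▸ Int.fract_nonneg _) (by positivity))
    (hny ▸ Int.fract_lt_one _)
  have hFx : F x = F y := by
    rw [show x = y + (⌊n * x⌋ : ℤ) * (1 / n) by ring, hper.int_mul]
  exact sub_eq_zero.mp (hFx.trans hFy)

theorem Function.Periodic.sum_comp_eq_sum_range {M ι : Type*} [AddCommMonoid M] {f : ℤ → M}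
    {N : ℕ} (hf : Function.Periodic f N) (hN : 0 < N) {s : Finset ι} (g : ι → ℤ) (hcard : #s = N)
    (hinj : ∀ x ∈ s, ∀ y ∈ s, g x ≡ g y [ZMOD N] → x = y) :
    ∑ x ∈ s, f (g x) = ∑ l ∈ range N, f l := by
  have hNZ : (0 : ℤ) < N := by exact_mod_cast hN
  set e : ι → ℕ := fun x => (g x % N).toNat
  have he : ∀ x, (e x : ℤ) = g x % N := fun x => Int.toNat_of_nonneg (Int.emod_nonneg _ hNZ.ne')
  have hmaps : Set.MapsTo e s (range N) := fun x _ => by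
    simpa using (show (e x : ℤ) < N from he x ▸ Int.emod_lt_of_pos _ hNZ)
  have hinj' : Set.InjOn e s := fun x hx y hy hxy =>
    hinj x hx y hy (by rw [Int.ModEq, ← he, ← he, hxy])
  refine sum_nbij e hmaps hinj' (surjOn_of_injOn_of_card_le e hmaps hinj' (by simp [hcard]))
    fun x _ => ?_
  rw [he, Int.emod_def, mul_comm, ← smul_eq_mul, hf.sub_zsmul_eq]

lemma eq_zero_of_mul_dvd_mul_sub_mul {a b x y : ℤ} (hab : IsCoprime a b) (hx : |x| < a)
    (hy : |y| < b) (h : a * b ∣ x * b - y * a) : x = 0 ∧ y = 0 := by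
  have hxb : a ∣ x * b := by simpa using (dvd_mul_right a b).trans h |>.add (dvd_mul_left a y)
  have hya : b ∣ y * a := by
    simpa using ((dvd_mul_left b a).trans h).sub (dvd_mul_left b x) |>.neg_right
  exact ⟨Int.eq_zero_of_abs_lt_dvd (hab.dvd_of_dvd_mul_right hxb) hx,
    Int.eq_zero_of_abs_lt_dvd (hab.symm.dvd_of_dvd_mul_right hya) hy⟩

lemma natCast_div_sub_natCast_div {a b : ℕ} (ha : 0 < a) (hb : 0 < b) (k i : ℕ) :
    (k : ℚ) / a - i / b = ((k * b - i * a : ℤ) : ℚ) / (a * b : ℕ) := by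
  have : (a : ℚ) ≠ 0 := by positivity
  have : (b : ℚ) ≠ 0 := by positivity
  push_cast; field_simp

theorem sum_sum_div_sub_div {a b : ℕ} (ha : 0 < a) (hb : 0 < b) (hab : IsCoprime (a : ℤ) b)
    (h : ℚ → ℚ) (hh : Function.Periodic h 1) :
    ∑ k ∈ range a, ∑ i ∈ range b, h (k / a - i / b) = ∑ l ∈ range (a * b), h (l / (a * b : ℕ)) := by
  have hab0 : ((a * b : ℕ) : ℚ) ≠ 0 := by positivity
  have hper : Function.Periodic (fun m : ℤ => h (m / (a * b : ℕ))) (a * b : ℕ) := fun m => by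
    simp only [Int.cast_add, Int.cast_natCast, add_div, div_self hab0, hh _]
  have hres := hper.sum_comp_eq_sum_range (by positivity) (s := range a ×ˢ range b)
    (fun p => p.1 * b - p.2 * a) (by simp) (by
      rintro ⟨k, i⟩ hki ⟨k', i'⟩ hki' hmod
      simp only [mem_product, mem_range] at hki hki'
      have := eq_zero_of_mul_dvd_mul_sub_mul hab (x := k' - k) (y := i' - i)
        (by rw [abs_lt]; omega) (by rw [abs_lt]; omega)
        (by push_cast at hmod; convert hmod.dvd using 1; ring)
      simp only [Prod.mk.injEq]; omega)
  simp only [Int.cast_natCast] at hres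
  rw [← hres, ← sum_product']
  exact sum_congr rfl fun p _ => by rw [natCast_div_sub_natCast_div ha hb]

lemma sum_range_natCast_sub_sq (n : ℕ) (x : ℚ) :
    ∑ l ∈ range n, ((l : ℚ) - x) ^ 2
      = n * x ^ 2 - n * (n - 1) * x + n * (n - 1) * (2 * n - 1) / 6 := by
  induction n with
  | zero => simp
  | succ n ih => rw [sum_range_succ, ih]; push_cast; ring

theorem sum_saw_div_sq {n : ℕ} (hn : 0 < n) :
    ∑ l ∈ range n, saw (l / n) ^ 2 = (n - 1) * (n - 2) / (12 * n) := by
  have hnQ : (n : ℚ) ≠ 0 := by positivity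
  have hterm : ∀ l ∈ range n,
      saw (l / n) ^ 2 = ((l : ℚ) - n / 2) ^ 2 / n ^ 2 - if l = 0 then 1 / 4 else 0 := by
    intro l hl
    rcases Nat.eq_zero_or_pos l with rfl | hl0
    · simp only [Nat.cast_zero, zero_div, saw_zero, if_true]
      field_simp
      ring
    · have hlt : (l : ℚ) < n := by exact_mod_cast mem_range.mp hl
      rw [saw_of_pos_of_lt_one (by positivity) ((div_lt_one (by positivity)).mpr hlt),
        if_neg hl0.ne']
      field_simp; ring
  rw [sum_congr rfl hterm, sum_sub_distrib, ← sum_div, sum_range_natCast_sub_sq, sum_ite_eq',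
    if_pos (mem_range.mpr hn)]
  field_simp
  ring

lemma saw_add_saw_add_saw_of_fract_eq_zero {α β γ : ℚ} (h : α + β + γ = 0)
    (hα : Int.fract α = 0) : saw α + saw β + saw γ = 0 := by
  obtain ⟨m, rfl⟩ := Int.fract_eq_zero_iff.mp hα
  rw [show γ = -β + (-m : ℤ) by push_cast; linarith, saw_add_intCast, saw_neg, saw_intCast]
  ring

theorem sq_saw_add_saw_add_saw {α β γ : ℚ} (h : α + β + γ = 0) :
    (saw α + saw β + saw γ) ^ 2 =
      if Int.fract α = 0 ∨ Int.fract β = 0 ∨ Int.fract γ = 0 then 0 else 1 / 4 := by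
  split_ifs with hint
  · rcases hint with hα | hβ | hγ
    · rw [saw_add_saw_add_saw_of_fract_eq_zero h hα]; ring
    · rw [show saw α + saw β + saw γ = saw β + saw γ + saw α by ring,
        saw_add_saw_add_saw_of_fract_eq_zero (by linarith) hβ]; ring
    · rw [show saw α + saw β + saw γ = saw γ + saw α + saw β by ring,
        saw_add_saw_add_saw_of_fract_eq_zero (by linarith) hγ]; ring
  simp only [not_or] at hint
  obtain ⟨hα, hβ, hγ⟩ := hint
  rw [saw_eq_ite, saw_eq_ite, saw_eq_ite, if_neg hα, if_neg hβ, if_neg hγ]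
  have hsum : Int.fract α + Int.fract β + Int.fract γ = ((-(⌊α⌋ + ⌊β⌋ + ⌊γ⌋) : ℤ) : ℚ) := by
    simp only [Int.fract]; push_cast; linarith
  have hpos : 0 < Int.fract α + Int.fract β + Int.fract γ := by
    have := (Int.fract_nonneg α).lt_of_ne' hα
    have := (Int.fract_nonneg β).lt_of_ne' hβ
    have := (Int.fract_nonneg γ).lt_of_ne' hγ
    linarith
  have hlt : Int.fract α + Int.fract β + Int.fract γ < 3 := by
    linarith [Int.fract_lt_one α, Int.fract_lt_one β, Int.fract_lt_one γ]
  rw [hsum] at hpos hlt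
  have : -(⌊α⌋ + ⌊β⌋ + ⌊γ⌋) = 1 ∨ -(⌊α⌋ + ⌊β⌋ + ⌊γ⌋) = 2 := by
    have := Int.cast_pos.mp hpos
    have : -(⌊α⌋ + ⌊β⌋ + ⌊γ⌋) < 3 := by exact_mod_cast hlt
    omega
  rw [show Int.fract α - 1 / 2 + (Int.fract β - 1 / 2) + (Int.fract γ - 1 / 2)
    = Int.fract α + Int.fract β + Int.fract γ - 3 / 2 by ring, hsum]
  rcases this with h | h <;> rw [h] <;> norm_num

lemma fract_natCast_div_sub_natCast_div_eq_zero_iff {a b : ℕ} (ha : 0 < a) (hb : 0 < b)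
    (hab : IsCoprime (a : ℤ) b) {k i : ℕ} (hk : k < a) (hi : i < b) :
    Int.fract ((k : ℚ) / a - i / b) = 0 ↔ k = 0 ∧ i = 0 := by
  refine ⟨fun h => ?_, fun ⟨hk, hi⟩ => by simp [hk, hi]⟩
  rw [natCast_div_sub_natCast_div ha hb, ← Int.cast_natCast,
    Int.fract_div_intCast_eq_div_intCast_mod, div_eq_zero_iff] at h
  have hdvd : ((a * b : ℕ) : ℤ) ∣ k * b - i * a := by
    refine Int.dvd_of_emod_eq_zero ?_
    simpa [show (a * b : ℚ) ≠ 0 by positivity] using h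
  push_cast at hdvd
  have := eq_zero_of_mul_dvd_mul_sub_mul hab (x := k) (y := i)
    (by rw [abs_lt]; omega) (by rw [abs_lt]; omega) hdvd
  omega

theorem sum_sq_saw_add_saw_add_saw {a b c : ℕ} (ha : 0 < a) (hb : 0 < b) (hc : 0 < c)
    (hab : IsCoprime (a : ℤ) b) (hbc : IsCoprime (b : ℤ) c) (hca : IsCoprime (c : ℤ) a) :
    ∑ k ∈ range a, ∑ i ∈ range b, ∑ j ∈ range c,
      (saw (k / a - i / b) + saw (i / b - j / c) + saw (j / c - k / a)) ^ 2
    = (a * b * c - a - b - c + 2) / 4 := by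
  -- `k / a - i / b` is an integer iff `k = i = 0`; inclusion-exclusion over the three pairs
  have hterm : ∀ k ∈ range a, ∀ i ∈ range b, ∀ j ∈ range c,
      (saw (k / a - i / b) + saw (i / b - j / c) + saw (j / c - k / a)) ^ 2
      = (1 : ℚ) / 4 - (if k = 0 ∧ i = 0 then 1 / 4 else 0) - (if i = 0 ∧ j = 0 then 1 / 4 else 0)
        - (if j = 0 ∧ k = 0 then 1 / 4 else 0) + (if k = 0 ∧ i = 0 ∧ j = 0 then 1 / 2 else 0) := by
    intro k hk i hi j hj
    rw [mem_range] at hk hi hj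
    rw [sq_saw_add_saw_add_saw (by ring)]
    simp only [fract_natCast_div_sub_natCast_div_eq_zero_iff ha hb hab hk hi,
      fract_natCast_div_sub_natCast_div_eq_zero_iff hb hc hbc hi hj,
      fract_natCast_div_sub_natCast_div_eq_zero_iff hc ha hca hj hk]
    split_ifs <;> first | omega | norm_num
  rw [sum_congr rfl fun k hk => sum_congr rfl fun i hi => sum_congr rfl fun j hj =>
    hterm k hk i hi j hj]
  simp only [ite_and, sum_add_distrib, sum_sub_distrib, sum_const, card_range, nsmul_eq_mul,
    sum_ite_irrel, sum_ite_eq', mem_range, ha, hb, hc, if_true, mul_ite, mul_zero]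
  ring

theorem sum_saw_sub_div (x : ℚ) {n : ℕ} (hn : 0 < n) :
    ∑ i ∈ range n, saw (x - i / n) = saw (n * x) := by
  have h := sum_saw_add_div (-x) hn
  rw [mul_neg, saw_neg] at h
  rw [← neg_neg (saw _), ← h, ← sum_neg_distrib]
  refine sum_congr rfl fun i _ => ?_
  rw [← saw_neg, neg_add, neg_neg, sub_eq_add_neg]

def dedekindSum (n : ℕ) (u v : ℤ) : ℚ :=
  ∑ k ∈ range n, saw (u * k / n) * saw (v * k / n)

lemma dedekindSum_natCast_eq_sum_sum_sum (a : ℕ) {b c : ℕ} (hb : 0 < b) (hc : 0 < c) :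
    dedekindSum a b c = ∑ k ∈ range a, ∑ i ∈ range b, ∑ j ∈ range c,
      saw (k / a - i / b) * saw (k / a - j / c) := by
  refine sum_congr rfl fun k _ => ?_
  rw [← sum_mul_sum, sum_saw_sub_div _ hb, sum_saw_sub_div _ hc]
  push_cast
  ring_nf

theorem dedekindSum_reciprocity {a b c : ℕ} (ha : 0 < a) (hb : 0 < b) (hc : 0 < c)
    (hab : IsCoprime (a : ℤ) b) (hbc : IsCoprime (b : ℤ) c) (hca : IsCoprime (c : ℤ) a) :
    dedekindSum a b c + dedekindSum b c a + dedekindSum c a b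
      = -1 / 4 + (a ^ 2 + b ^ 2 + c ^ 2) / (12 * a * b * c) := by
  have hsq : Function.Periodic (fun x => saw x ^ 2) 1 := saw_periodic.comp (· ^ 2)
  have hsplit : ∀ x y z : ℚ, saw (x - y) * saw (x - z) + saw (y - z) * saw (y - x)
      + saw (z - x) * saw (z - y) = (saw (x - y) ^ 2 + saw (y - z) ^ 2 + saw (x - z) ^ 2) / 2
        - (saw (x - y) + saw (y - z) + saw (z - x)) ^ 2 / 2 := by
    intro x y z
    rw [← neg_sub z x, ← neg_sub x y, ← neg_sub y z, saw_neg, saw_neg, saw_neg]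
    ring
  have hP : ∑ k ∈ range a, ∑ i ∈ range b, ∑ j ∈ range c, saw (k / a - i / b) ^ 2
      = c * ((a * b - 1) * (a * b - 2) / (12 * (a * b))) := by
    simp only [sum_const, card_range, nsmul_eq_mul, ← mul_sum]
    rw [sum_sum_div_sub_div ha hb hab _ hsq, sum_saw_div_sq (by positivity)]
    push_cast; ring
  have hQ : ∑ k ∈ range a, ∑ i ∈ range b, ∑ j ∈ range c, saw (i / b - j / c) ^ 2
      = a * ((b * c - 1) * (b * c - 2) / (12 * (b * c))) := by
    rw [sum_const, card_range, nsmul_eq_mul, sum_sum_div_sub_div hb hc hbc _ hsq,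
      sum_saw_div_sq (by positivity)]
    push_cast; ring
  have hR : ∑ k ∈ range a, ∑ i ∈ range b, ∑ j ∈ range c, saw (k / a - j / c) ^ 2
      = b * ((a * c - 1) * (a * c - 2) / (12 * (a * c))) := by
    simp only [sum_const, card_range, nsmul_eq_mul, ← mul_sum]
    rw [sum_sum_div_sub_div ha hc hca.symm _ hsq, sum_saw_div_sq (by positivity)]
    push_cast; ring
  calc dedekindSum a b c + dedekindSum b c a + dedekindSum c a b
      = ∑ k ∈ range a, ∑ i ∈ range b, ∑ j ∈ range c,
          (saw (k / a - i / b) * saw (k / a - j / c) + saw (i / b - j / c) * saw (i / b - k / a)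
            + saw (j / c - k / a) * saw (j / c - i / b)) := by
        have hb' : dedekindSum b c a = ∑ k ∈ range a, ∑ i ∈ range b, ∑ j ∈ range c,
            saw (i / b - j / c) * saw (i / b - k / a) := by
          rw [dedekindSum_natCast_eq_sum_sum_sum b hc ha]
          exact (sum_congr rfl fun _ _ => sum_comm).trans sum_comm
        have hc' : dedekindSum c a b = ∑ k ∈ range a, ∑ i ∈ range b, ∑ j ∈ range c,
            saw (j / c - k / a) * saw (j / c - i / b) := by
          rw [dedekindSum_natCast_eq_sum_sum_sum c ha hb]
          exact sum_comm.trans (sum_congr rfl fun _ _ => sum_comm)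
        rw [dedekindSum_natCast_eq_sum_sum_sum a hb hc, hb', hc']
        simp only [← sum_add_distrib]
    _ = (c * ((a * b - 1) * (a * b - 2) / (12 * (a * b)))
          + a * ((b * c - 1) * (b * c - 2) / (12 * (b * c)))
          + b * ((a * c - 1) * (a * c - 2) / (12 * (a * c)))) / 2
          - ((a * b * c - a - b - c + 2) / 4) / 2 := by
        rw [sum_congr rfl fun _ _ => sum_congr rfl fun _ _ => sum_congr rfl fun _ _ =>
          hsplit _ _ _]
        simp only [sum_sub_distrib, sum_add_distrib, ← sum_div]
        rw [hP, hQ, hR, sum_sq_saw_add_saw_add_saw ha hb hc hab hbc hca]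
    _ = -1 / 4 + (a ^ 2 + b ^ 2 + c ^ 2) / (12 * a * b * c) := by
        field_simp
        ring

lemma saw_intCast_div_congr {n : ℕ} {x y : ℤ} (h : x ≡ y [ZMOD n]) :
    saw (x / n) = saw (y / n) := by
  obtain ⟨m, hm⟩ := h.dvd
  rcases Nat.eq_zero_or_pos n with rfl | hn
  · simp_all
  rw [show (y : ℚ) = x + n * m by rw [← sub_eq_iff_eq_add']; exact_mod_cast hm, add_div,
    mul_div_cancel_left₀ _ (by positivity), saw_add_intCast]

lemma dedekindSum_comm (n : ℕ) (u v : ℤ) : dedekindSum n u v = dedekindSum n v u :=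
  sum_congr rfl fun _ _ => mul_comm _ _

lemma dedekindSum_congr {n : ℕ} {u u' v v' : ℤ} (hu : u ≡ u' [ZMOD n]) (hv : v ≡ v' [ZMOD n]) :
    dedekindSum n u v = dedekindSum n u' v' := by
  refine sum_congr rfl fun k _ => ?_
  have := saw_intCast_div_congr (hu.mul_right k)
  have := saw_intCast_div_congr (hv.mul_right k)
  push_cast at *
  congr 1

lemma dedekindSum_neg_right (n : ℕ) (u v : ℤ) : dedekindSum n u (-v) = -dedekindSum n u v := by
  rw [dedekindSum, dedekindSum, ← sum_neg_distrib]
  refine sum_congr rfl fun k _ => ?_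
  rw [Int.cast_neg, neg_mul, neg_div, saw_neg, mul_neg]

lemma sum_range_comp_mul_of_isCoprime {M : Type*} [AddCommMonoid M] {n : ℕ} {w : ℤ}
    (hw : IsCoprime w n) (f : ℤ → M) (hf : Function.Periodic f n) :
    ∑ k ∈ range n, f (w * k) = ∑ k ∈ range n, f k := by
  rcases Nat.eq_zero_or_pos n with rfl | hn
  · simp
  refine hf.sum_comp_eq_sum_range hn _ (card_range n) fun k hk k' hk' hmod => ?_
  simp only [mem_range] at hk hk'
  have hdvd : (n : ℤ) ∣ w * (k' - k) := by rw [mul_sub]; exact hmod.dvd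
  have := Int.eq_zero_of_abs_lt_dvd (hw.symm.dvd_of_dvd_mul_left hdvd) (by rw [abs_lt]; omega)
  omega

lemma dedekindSum_mul_mul {n : ℕ} {w : ℤ} (hw : IsCoprime w n) (u v : ℤ) :
    dedekindSum n (w * u) (w * v) = dedekindSum n u v := by
  have hper : Function.Periodic (fun m : ℤ => saw (u * m / n) * saw (v * m / n)) n := by
    intro m
    rcases Nat.eq_zero_or_pos n with rfl | hn
    · simp
    simp only [Int.cast_add, Int.cast_natCast, mul_add, add_div,
      mul_div_cancel_right₀ _ (show (n : ℚ) ≠ 0 by positivity), saw_add_intCast]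
  have := sum_range_comp_mul_of_isCoprime hw _ hper
  simp only [Int.cast_mul, Int.cast_natCast] at this
  rw [dedekindSum, dedekindSum, ← this]
  simp only [Int.cast_mul, mul_assoc, mul_comm (w : ℚ)]

@[simp] lemma dedekindSum_one (u v : ℤ) : dedekindSum 1 u v = 0 := by
  simp [dedekindSum]

lemma S_natCast_eq_dedekindSum (x : ℤ) (n : ℕ) : S x n = 12 * dedekindSum n 1 x := by
  have hshift := sum_range_succ_eq_of_eq (fun k : ℕ => saw (k / n) * saw (x * k / n)) (n := n) (by
    rcases Nat.eq_zero_or_pos n with rfl | hn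
    · rfl
    have : saw 1 = 0 := by exact_mod_cast saw_intCast 1
    simp [div_self (show (n : ℚ) ≠ 0 by positivity), this])
  rw [S, dedekindSum, Int.toNat_natCast, ← Ico_add_one_right_eq_Icc, sum_Ico_eq_sum_range]
  simp only [Int.cast_natCast, Int.cast_one, one_mul, Nat.add_sub_cancel, add_comm 1]
  exact congrArg _ hshift

lemma S_neg_left (x y : ℤ) : S (-x) y = -S x y := by
  simp only [S, Int.cast_neg, neg_mul, neg_div, saw_neg, mul_neg, sum_neg_distrib]

lemma isCoprime_self_sq_add_one {R : Type*} [CommRing R] (a : R) : IsCoprime a (a ^ 2 + 1) :=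
  ⟨-a, 1, by ring⟩

theorem S_eq_of_pos (q t a b tstar : ℤ) (hq : 0 < q) (ht : 0 < t) (ha : 0 < a)
    (htq : IsCoprime t q) (haq : IsCoprime a q) (hta : t ∣ a ^ 2 + 1)
    (hb : b * t = q * (a ^ 2 + 1)) (hts : t * tstar ≡ 1 [ZMOD q]) :
    S a b = ((q ^ 2 - 1 : ℚ) * a) / (t * q) - S (a * q) t + S (a * tstar) q := by
  have hb0 : 0 < b := pos_of_mul_pos_left (hb ▸ by positivity) ht.le
  have hac := isCoprime_self_sq_add_one a
  have hat : IsCoprime a t := hac.of_isCoprime_of_dvd_right hta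
  have hab : IsCoprime a b := (haq.mul_right hac).of_isCoprime_of_dvd_right ⟨t, hb.symm⟩
  have htsq : IsCoprime tstar q := by
    obtain ⟨m, hm⟩ := hts.dvd
    exact ⟨t, m, by linear_combination -hm⟩
  lift q to ℕ using hq.le
  lift t to ℕ using ht.le
  lift a to ℕ using ha.le
  lift b to ℕ using hb0.le
  simp only [Nat.cast_pos] at hq ht ha hb0
  have E1 := dedekindSum_reciprocity ha hb0 one_pos hab
    (by rw [Nat.cast_one]; exact isCoprime_one_right)
    (by rw [Nat.cast_one]; exact isCoprime_one_left)
  have E2 := dedekindSum_reciprocity ha ht hq hat htq haq.symm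
  have L1 : dedekindSum a b 1 = dedekindSum a t q := by
    rw [← dedekindSum_mul_mul hat.symm, mul_one, dedekindSum_comm a t q]
    exact dedekindSum_congr (Int.modEq_iff_dvd.mpr ⟨-(q * a), by linear_combination -hb⟩) rfl
  have L2 : dedekindSum t q a = -dedekindSum t 1 (a * q) := by
    rw [← dedekindSum_mul_mul hat q a, dedekindSum_comm t 1, ← dedekindSum_neg_right]
    exact dedekindSum_congr rfl (Int.modEq_iff_dvd.mpr
      (by rw [show (-1 : ℤ) - a * a = -(a ^ 2 + 1) by ring]; exact hta.neg_right))
  have L3 : dedekindSum q a t = dedekindSum q 1 (a * tstar) := by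
    rw [← dedekindSum_mul_mul htsq, dedekindSum_comm q 1, mul_comm tstar a]
    exact dedekindSum_congr rfl (by rwa [mul_comm])
  have hbQ : (b : ℚ) = q * (a ^ 2 + 1) / t := by
    rw [eq_div_iff (by positivity)]; exact_mod_cast hb
  have key : (a ^ 2 + b ^ 2 + 1 : ℚ) / (a * b) - (a ^ 2 + t ^ 2 + q ^ 2) / (a * t * q)
      = (q ^ 2 - 1) * a / (t * q) := by
    rw [hbQ]; field_simp; ring
  rw [S_natCast_eq_dedekindSum, S_natCast_eq_dedekindSum, S_natCast_eq_dedekindSum]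
  simp only [Nat.cast_one, dedekindSum_one, one_pow, mul_one] at E1
  linear_combination 12 * E1 - 12 * E2 - 12 * L1 + 12 * L2 + 12 * L3 + key

theorem stmt4 (q t a b tstar : ℤ) (hq : 2 ≤ q) (ht : 0 < t) (htq : IsCoprime t q)
    (haq : IsCoprime a q) (hta : t ∣ a ^ 2 + 1) (hb : b * t = q * (a ^ 2 + 1))
    (hts : t * tstar ≡ 1 [ZMOD q]) :
    S a b = ((q ^ 2 - 1 : ℚ) * a) / (t * q) - S (a * q) t + S (a * tstar) q := by
  rcases lt_trichotomy a 0 with ha | rfl | ha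
  · have := S_eq_of_pos q t (-a) b tstar (by omega) ht (by omega) htq haq.neg_left
      (by rwa [neg_sq]) (by rwa [neg_sq]) hts
    simp only [neg_mul, S_neg_left, Int.cast_neg, mul_neg, neg_div] at this
    linarith
  · have := Int.isUnit_iff.mp (isCoprime_zero_left.mp haq)
    omega
  · exact S_eq_of_pos q t a b tstar (by omega) ht ha htq haq hta hb hts
end

section
/- Fix q ≥ 2 and define Δ(ℓ) = (q²−1)ℓ + q·S(ℓ,q) for integers ℓ coprime to q. Then Δ(ℓ) ≡ ℓ* (mod q), where ℓℓ* ≡ 1 (mod q); in particular Δ induces a bijection from (ℤ/qℤ)ˣ to itself. -/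
def Δ (q l : ℤ) : ℚ := ((q ^ 2 - 1 : ℤ) : ℚ) * l + (q : ℚ) * S l q

/-!
For `a` prime to `N`, write `a k = N ⌊a k / N⌋ + r k` with `0 ≤ r k < N`. Multiplication by `a`
permutes the residues mod `N`, so `∑ r k = ∑ k` and `∑ (r k)² = ∑ k²`. The first identity turns
`N · S(a, N)` into the integer `2a(N-1)(2N-1) - 12 ∑ k ⌊a k / N⌋ - 3N(N-1)`; the second, applied to
`∑ (a k - r k)² = N² ∑ ⌊a k / N⌋²`, shows that `a · N · S(a, N) ≡ 1 + a² (mod N)`. Hence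
`l · Δ(l) ≡ -l² + 1 + l² = 1 (mod N)`: `Δ` reduces to inversion on `(ℤ/Nℤ)ˣ`.
-/

open Finset

lemma saw_intCast_div_natCast {m : ℤ} {N : ℕ} [NeZero N] (hm : ¬ (N : ℤ) ∣ m) :
    saw (m / N) = ((m % N : ℤ) : ℚ) / N - 1 / 2 := by
  have hden := Rat.den_div_intCast_eq_one_iff m N (by exact_mod_cast NeZero.ne N)
  rw [Int.cast_natCast] at hden
  rw [saw, if_neg (mt hden.mp hm), Int.fract_div_intCast_eq_div_intCast_mod]

lemma sum_range_comp_mul_emod {M : Type*} [AddCommMonoid M] {N : ℕ} [NeZero N] {a : ℤ}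
    (ha : IsCoprime a N) (g : ℤ → M) :
    ∑ k ∈ range N, g (a * k % N) = ∑ k ∈ range N, g k := by
  set φ : ℕ → ℕ := fun k => ((a * k : ℤ) : ZMod N).val
  have hφ : ∀ k : ℕ, a * k % N = φ k := fun k => (ZMod.val_intCast _).symm
  have hinj : Set.InjOn φ (range N) := by
    intro k hk k' hk' h
    have h' : (a : ZMod N) * k = a * k' := by simpa [φ] using ZMod.val_injective N h
    have hkk' := (ZMod.unitOfIsCoprime a ha).isUnit.mul_left_cancel h'
    rwa [ZMod.natCast_eq_natCast_iff', Nat.mod_eq_of_lt (mem_range.mp hk),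
      Nat.mod_eq_of_lt (mem_range.mp hk')] at hkk'
  have himage : (range N).image φ = range N :=
    eq_of_subset_of_card_le
      (fun j hj => by
        obtain ⟨k, -, rfl⟩ := mem_image.mp hj
        exact mem_range.mpr (ZMod.val_lt _))
      (card_image_of_injOn hinj).ge
  calc ∑ k ∈ range N, g (a * k % N) = ∑ k ∈ range N, g (φ k) := by simp only [hφ]
    _ = ∑ j ∈ (range N).image φ, g j := (sum_image (f := fun j : ℕ => g j) hinj).symm
    _ = ∑ k ∈ range N, g k := by rw [himage]

lemma two_mul_sum_range_id (N : ℕ) : 2 * ∑ k ∈ range N, (k : ℤ) = N * (N - 1) := by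
  induction N with
  | zero => simp
  | succ n ih => rw [sum_range_succ]; push_cast; linear_combination ih

lemma six_mul_sum_range_sq (N : ℕ) :
    6 * ∑ k ∈ range N, (k : ℤ) ^ 2 = N * (N - 1) * (2 * N - 1) := by
  induction N with
  | zero => simp
  | succ n ih => rw [sum_range_succ]; push_cast; linear_combination ih

lemma sum_range_mul_emod (a : ℤ) (N : ℕ) :
    ∑ k ∈ range N, (k : ℤ) * (a * k % N)
      = a * ∑ k ∈ range N, (k : ℤ) ^ 2 - N * ∑ k ∈ range N, k * (a * k / N) := by
  rw [mul_sum, mul_sum, ← sum_sub_distrib]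
  exact sum_congr rfl fun k _ => by rw [Int.emod_def]; ring

lemma sum_range_emod_sq (a : ℤ) (N : ℕ) :
    ∑ k ∈ range N, (a * k % N) ^ 2 = a ^ 2 * ∑ k ∈ range N, (k : ℤ) ^ 2
      - 2 * a * N * ∑ k ∈ range N, k * (a * k / N) + N ^ 2 * ∑ k ∈ range N, (a * k / N) ^ 2 := by
  calc _ = ∑ k ∈ range N, (a ^ 2 * (k : ℤ) ^ 2 - 2 * a * N * (k * (a * k / N))
          + N ^ 2 * (a * k / N) ^ 2) := sum_congr rfl fun k _ => by rw [Int.emod_def]; ring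
    _ = _ := by simp only [sum_add_distrib, sum_sub_distrib, ← mul_sum]

def dedekindNumerator (a : ℤ) (N : ℕ) : ℤ :=
  2 * a * (N - 1) * (2 * N - 1) - 12 * ∑ k ∈ range N, k * (a * k / N) - 3 * N * (N - 1)

section
variable {N : ℕ} [NeZero N] {a : ℤ}

lemma S_natCast_eq_sum_Ico (ha : IsCoprime a N) :
    S a N = 3 * ((∑ k ∈ Ico 1 N, (2 * k - N) * (2 * (a * k % N) - N) : ℤ) : ℚ) / N ^ 2 := by
  have hN : (N : ℚ) ≠ 0 := by exact_mod_cast NeZero.ne N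
  have hterm : ∀ k ∈ Ico 1 N, saw ((k : ℚ) / N) * saw (a * k / N)
      = (((2 * k - N) * (2 * (a * k % N) - N) : ℤ) : ℚ) / (4 * N ^ 2) := by
    intro k hk
    obtain ⟨hk1, hkN⟩ := mem_Ico.mp hk
    have hndvd : ¬ (N : ℤ) ∣ k := fun h =>
      absurd (Int.le_of_dvd (by omega) h) (by omega)
    have hsk := saw_intCast_div_natCast hndvd
    have hsak := saw_intCast_div_natCast (fun h => hndvd (ha.symm.dvd_of_dvd_mul_left h))
    rw [Int.emod_eq_of_lt (by omega) (by omega)] at hsk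
    push_cast at hsk hsak ⊢
    rw [hsk, hsak]
    field_simp
    ring
  have htop : saw ((N : ℚ) / N) = 0 := by simp [saw]
  rw [S, Int.toNat_natCast, ← Ico_insert_right NeZero.one_le, sum_insert (by simp)]
  simp only [Int.cast_natCast]
  rw [htop, zero_mul, zero_add, sum_congr rfl hterm, ← sum_div, Int.cast_sum]
  field_simp
  ring

lemma three_mul_sum_Ico_eq_mul_dedekindNumerator (ha : IsCoprime a N) :
    3 * ∑ k ∈ Ico 1 N, (2 * k - N) * (2 * (a * k % N) - N) = N * dedekindNumerator a N := by
  have hexpand : ∑ k ∈ range N, (2 * (k : ℤ) - N) * (2 * (a * k % N) - N)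
      = 4 * ∑ k ∈ range N, (k : ℤ) * (a * k % N) - 2 * N * ∑ k ∈ range N, (k : ℤ)
        - 2 * N * ∑ k ∈ range N, (a * k % N) + N * N ^ 2 := by
    calc _ = ∑ k ∈ range N, (4 * ((k : ℤ) * (a * k % N)) - 2 * N * k - 2 * N * (a * k % N)
            + N ^ 2) := sum_congr rfl fun k _ => by ring
      _ = _ := by
        simp only [sum_add_distrib, sum_sub_distrib, ← mul_sum, sum_const, card_range,
          nsmul_eq_mul]
  have hperm : ∑ k ∈ range N, (a * k % N) = ∑ k ∈ range N, (k : ℤ) :=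
    sum_range_comp_mul_emod ha id
  rw [sum_range_eq_add_Ico _ (Nat.pos_of_neZero N)] at hexpand
  simp only [CharP.cast_eq_zero, mul_zero, Int.zero_emod, zero_sub] at hexpand
  rw [dedekindNumerator]
  linear_combination 3 * hexpand + 12 * sum_range_mul_emod a N - 6 * N * hperm
    + 2 * a * six_mul_sum_range_sq N - 6 * N * two_mul_sum_range_id N

lemma natCast_mul_S (ha : IsCoprime a N) : (N : ℚ) * S a N = dedekindNumerator a N := by
  have hN : (N : ℚ) ≠ 0 := by exact_mod_cast NeZero.ne N
  rw [S_natCast_eq_sum_Ico ha]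
  have h := three_mul_sum_Ico_eq_mul_dedekindNumerator ha
  generalize (∑ k ∈ Ico 1 N, _ : ℤ) = W at h ⊢
  field_simp
  exact_mod_cast h

lemma mul_dedekindNumerator_modEq (ha : IsCoprime a N) :
    a * dedekindNumerator a N ≡ 1 + a ^ 2 [ZMOD N] := by
  have hN : (N : ℤ) ≠ 0 := by exact_mod_cast NeZero.ne N
  have hperm := sum_range_comp_mul_emod ha (· ^ 2)
  refine Int.modEq_iff_dvd.mpr ⟨-((1 + a ^ 2) * (2 * N - 3) - 3 * a * (N - 1)
    - 6 * ∑ k ∈ range N, (a * k / N) ^ 2), mul_left_cancel₀ hN ?_⟩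
  rw [dedekindNumerator]
  linear_combination 6 * sum_range_emod_sq a N - 6 * hperm + (a ^ 2 - 1) * six_mul_sum_range_sq N

lemma Δ_natCast_eq_intCast (ha : IsCoprime a N) :
    Δ N a = (((N : ℤ) ^ 2 - 1) * a + dedekindNumerator a N : ℤ) := by
  rw [Δ, Int.cast_natCast, natCast_mul_S ha]
  push_cast
  ring

lemma mul_modEq_one_of_intCast_eq_Δ (ha : IsCoprime a N) {n : ℤ} (hn : (n : ℚ) = Δ N a) :
    a * n ≡ 1 [ZMOD N] := by
  rw [Δ_natCast_eq_intCast ha, Int.cast_inj] at hn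
  have hnum := (ZMod.intCast_eq_intCast_iff _ _ _).mpr (mul_dedekindNumerator_modEq ha)
  rw [hn, ← ZMod.intCast_eq_intCast_iff]
  push_cast at hnum ⊢
  rw [ZMod.natCast_self]
  linear_combination hnum

end

theorem stmt6 (q : ℤ) (hq : 2 ≤ q) :
    (∀ l lstar : ℤ, IsCoprime l q → l * lstar ≡ 1 [ZMOD q] →
      ∃ n : ℤ, (n : ℚ) = Δ q l ∧ n ≡ lstar [ZMOD q]) ∧
    (∀ m : ℤ, IsCoprime m q →
      ∃ l : ℤ, IsCoprime l q ∧ ∃ n : ℤ, (n : ℚ) = Δ q l ∧ n ≡ m [ZMOD q]) ∧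
    (∀ l₁ l₂ n₁ n₂ : ℤ, IsCoprime l₁ q → IsCoprime l₂ q →
      (n₁ : ℚ) = Δ q l₁ → (n₂ : ℚ) = Δ q l₂ → n₁ ≡ n₂ [ZMOD q] → l₁ ≡ l₂ [ZMOD q]) := by
  lift q to ℕ using (by omega)
  have : NeZero q := ⟨by omega⟩
  have hinv : ∀ l lstar : ℤ, IsCoprime l q → l * lstar ≡ 1 [ZMOD q] →
      ∃ n : ℤ, (n : ℚ) = Δ q l ∧ n ≡ lstar [ZMOD q] := by
    intro l lstar hl hlstar
    obtain ⟨n, hn⟩ : ∃ n : ℤ, (n : ℚ) = Δ q l := ⟨_, (Δ_natCast_eq_intCast hl).symm⟩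
    refine ⟨n, hn, ?_⟩
    have hln := mul_modEq_one_of_intCast_eq_Δ hl hn
    rw [← ZMod.intCast_eq_intCast_iff] at hln hlstar ⊢
    push_cast at hln hlstar
    linear_combination lstar * hln - n * hlstar
  refine ⟨hinv, fun m hm => ?_, fun l₁ l₂ n₁ n₂ hl₁ hl₂ hn₁ hn₂ hn => ?_⟩
  · obtain ⟨u, v, huv⟩ := hm
    have hu : IsCoprime u q := ⟨m, v, by linarith⟩
    exact ⟨u, hu, hinv u m hu (Int.modEq_iff_dvd.mpr ⟨v, by linarith⟩)⟩
  · have h₁ := mul_modEq_one_of_intCast_eq_Δ hl₁ hn₁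
    have h₂ := mul_modEq_one_of_intCast_eq_Δ hl₂ hn₂
    rw [← ZMod.intCast_eq_intCast_iff] at h₁ h₂ hn ⊢
    push_cast at h₁ h₂
    linear_combination l₂ * h₁ - l₁ * h₂ - l₁ * l₂ * hn
end
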